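/- arXiv:2301.08328 — 2 statements merged into one kernel-verified Lean document; each statement's English description precedes it below -/
import Mathlib

section
/- For the simple random walk with up-probability p, let u_i(p) be the conditional probability that the walk steps up from level i, given that the walk (started at 0) returns to 0 before hitting ±k, for -k+1 ≤ i ≤ k-1. Then u_i satisfies the recursion u_i(p) = p(1-p) + u_{i+1}(p) u_i(p) for 1 ≤ i ≤ k-2, with boundary condition u_{k-1}(p) = 0. -/
open scoped Classical
noncomputable section

def walkPos {n : ℕ} (x : Fin n → Bool) (m : ℕ) : ℤ :=
  ∑ i : Fin n, if (i : ℕ) < m then (if x i then (1 : ℤ) else -1) else 0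

def walkWt {n : ℕ} (p : ℝ) (x : Fin n → Bool) : ℝ :=
  ∏ i : Fin n, if x i then p else 1 - p

/-- Probability that the walk started at level `i` hits 0 before leaving `(-k, k)`. -/
def hitZero (p : ℝ) (k : ℕ) (i : ℤ) : ℝ :=
  ∑' n : ℕ, ∑ x : Fin n → Bool,
    if (i + walkPos x n = 0 ∧
        ∀ m, m < n → i + walkPos x m ≠ 0 ∧ |i + walkPos x m| < (k : ℤ))
    then walkWt p x else 0

/-- `u_i(p)`: the conditional probability that the walk steps up from level `i`,
given that (started at 0) it returns to 0 before hitting `±k`.  By the Markov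
property this is `p · P_{i+1}(hit 0 before ±k) / P_i(hit 0 before ±k)`. -/
def uCond (p : ℝ) (k : ℕ) (i : ℤ) : ℝ :=
  p * hitZero p k (i + 1) / hitZero p k i

/-!
`hitZero p k j` is a series over path lengths `n` whose `n`-th term is the probability of the
paths from `j` that reach 0 for the first time at step `n` without touching `±k` before. Splitting
off the first step of such a path gives the harmonic equation
`h(j) = p h(j+1) + (1-p) h(j-1)` for `0 < |j| < k`, with `h = 0` outside `(-k, k)`; the
all-down path shows `h(j) > 0` for `0 < j < k`. The recursion for `u_i = p h(i+1) / h(i)` is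
the harmonic equation at `i + 1` divided by `h(i+1) h(i)`.
-/

section FirstStep

variable {k : ℕ} {j : ℤ} {n : ℕ}

def stepOf (b : Bool) : ℤ := if b then 1 else -1

def IsFirstZeroPath (k : ℕ) (j : ℤ) (x : Fin n → Bool) : Prop :=
  j + walkPos x n = 0 ∧ ∀ m, m < n → j + walkPos x m ≠ 0 ∧ |j + walkPos x m| < (k : ℤ)

def firstZeroProb (p : ℝ) (k : ℕ) (j : ℤ) (n : ℕ) : ℝ :=
  ∑ x : Fin n → Bool, if IsFirstZeroPath k j x then walkWt p x else 0

theorem hitZero_eq_tsum_firstZeroProb (p : ℝ) (k : ℕ) (j : ℤ) :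
    hitZero p k j = ∑' n, firstZeroProb p k j n := by
  unfold hitZero firstZeroProb IsFirstZeroPath
  -- the two `if`s differ only in their `Decidable` instances
  exact tsum_congr fun n => Finset.sum_congr rfl fun x _ => by congr

@[simp]
theorem walkPos_zero (x : Fin n → Bool) : walkPos x 0 = 0 := by
  simp [walkPos]

theorem walkPos_cons_succ (b : Bool) (t : Fin n → Bool) (m : ℕ) :
    walkPos (Fin.cons b t) (m + 1) = stepOf b + walkPos t m := by
  simp only [walkPos, Fin.sum_univ_succ, Fin.cons_zero, Fin.cons_succ, Fin.val_zero,
    Nat.zero_lt_succ, if_true, Fin.val_succ, Nat.succ_lt_succ_iff, stepOf]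

theorem walkPos_const_false {m : ℕ} (hm : m ≤ n) :
    walkPos (fun _ : Fin n => false) m = -(m : ℤ) := by
  simp only [walkPos, Bool.false_eq_true, if_false]
  rw [Fin.sum_univ_eq_sum_range (fun i => if i < m then (-1 : ℤ) else 0),
    ← Finset.sum_range_add_sum_Ico _ hm,
    Finset.sum_congr rfl fun i hi => if_pos (Finset.mem_range.mp hi),
    Finset.sum_congr rfl fun i hi => if_neg (Finset.mem_Ico.mp hi).1.not_gt]
  simp

theorem walkWt_cons (p : ℝ) (b : Bool) (t : Fin n → Bool) :
    walkWt p (Fin.cons b t) = (if b then p else 1 - p) * walkWt p t := by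
  simp only [walkWt, Fin.prod_univ_succ, Fin.cons_zero, Fin.cons_succ]

theorem walkWt_const_false (p : ℝ) : walkWt p (fun _ : Fin n => false) = (1 - p) ^ n := by
  simp [walkWt]

theorem walkWt_nonneg {p : ℝ} (hp : 0 ≤ p) (hp1 : p ≤ 1) (x : Fin n → Bool) :
    0 ≤ walkWt p x :=
  Finset.prod_nonneg fun i _ => by cases x i <;> simp <;> linarith

theorem isFirstZeroPath_cons_iff (hj : j ≠ 0) (hjk : |j| < k) (b : Bool) (t : Fin n → Bool) :
    IsFirstZeroPath k j (Fin.cons b t) ↔ IsFirstZeroPath k (j + stepOf b) t := by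
  simp only [IsFirstZeroPath, walkPos_cons_succ, ← add_assoc]
  refine and_congr Iff.rfl ⟨fun h m hm => ?_, fun h m hm => ?_⟩
  · simpa only [walkPos_cons_succ, ← add_assoc] using h (m + 1) (by omega)
  · cases m with
    | zero => simpa using ⟨hj, hjk⟩
    | succ m => simpa only [walkPos_cons_succ, ← add_assoc] using h m (by omega)

theorem not_isFirstZeroPath_zero_succ (x : Fin (n + 1) → Bool) : ¬IsFirstZeroPath k 0 x :=
  fun h => (h.2 0 n.succ_pos).1 (by simp)

theorem not_isFirstZeroPath_of_le_abs (hj : j ≠ 0) (hjk : (k : ℤ) ≤ |j|)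
    (x : Fin n → Bool) : ¬IsFirstZeroPath k j x := by
  rintro ⟨hzero, hinside⟩
  cases n with
  | zero => exact hj (by simpa using hzero)
  | succ n => exact (hinside 0 n.succ_pos).2.not_ge (by simpa using hjk)

variable {p : ℝ}

theorem firstZeroProb_nonneg (hp : 0 ≤ p) (hp1 : p ≤ 1) (k : ℕ) (j : ℤ) (n : ℕ) :
    0 ≤ firstZeroProb p k j n :=
  Finset.sum_nonneg fun x _ => by split <;> simp [walkWt_nonneg hp hp1 x]

theorem firstZeroProb_zero_of_ne (hj : j ≠ 0) : firstZeroProb p k j 0 = 0 := by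
  simp [firstZeroProb, IsFirstZeroPath, hj]

theorem firstZeroProb_zero_zero : firstZeroProb p k 0 0 = 1 := by
  simp [firstZeroProb, IsFirstZeroPath, walkWt]

theorem firstZeroProb_zero_succ : firstZeroProb p k 0 (n + 1) = 0 :=
  Finset.sum_eq_zero fun x _ => if_neg (not_isFirstZeroPath_zero_succ x)

theorem firstZeroProb_of_le_abs (hj : j ≠ 0) (hjk : (k : ℤ) ≤ |j|) (n : ℕ) :
    firstZeroProb p k j n = 0 :=
  Finset.sum_eq_zero fun x _ => if_neg (not_isFirstZeroPath_of_le_abs hj hjk x)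

theorem firstZeroProb_succ (hj : j ≠ 0) (hjk : |j| < k) (n : ℕ) :
    firstZeroProb p k j (n + 1) =
      p * firstZeroProb p k (j + 1) n + (1 - p) * firstZeroProb p k (j - 1) n := by
  have first_step (b : Bool) :
      ∑ t : Fin n → Bool,
          (if IsFirstZeroPath k j (Fin.cons b t) then walkWt p (Fin.cons b t) else 0) =
        (if b then p else 1 - p) * firstZeroProb p k (j + stepOf b) n := by
    rw [firstZeroProb, Finset.mul_sum]
    refine Finset.sum_congr rfl fun t _ => ?_
    rw [isFirstZeroPath_cons_iff hj hjk, walkWt_cons, mul_ite, mul_zero]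
  rw [firstZeroProb, ← (Fin.consEquiv fun _ => Bool).sum_comp, Fintype.sum_prod_type,
    Fintype.sum_bool]
  simp only [Fin.consEquiv, Equiv.coe_fn_mk]
  erw [first_step true, first_step false]
  simp [stepOf, ← sub_eq_add_neg]

theorem sum_range_firstZeroProb_le_one (hp : 0 ≤ p) (hp1 : p ≤ 1) (N : ℕ) (j : ℤ) :
    ∑ n ∈ Finset.range N, firstZeroProb p k j n ≤ 1 := by
  induction N generalizing j with
  | zero => simp
  | succ N ih =>
    rw [Finset.sum_range_succ']
    rcases eq_or_ne j 0 with rfl | hj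
    · simp [firstZeroProb_zero_succ, firstZeroProb_zero_zero]
    rcases lt_or_ge |j| k with hjk | hjk
    · simp only [firstZeroProb_succ hj hjk, firstZeroProb_zero_of_ne hj, add_zero,
        Finset.sum_add_distrib, ← Finset.mul_sum]
      nlinarith [ih (j + 1), ih (j - 1)]
    · simp [firstZeroProb_of_le_abs hj hjk]

theorem summable_firstZeroProb (hp : 0 ≤ p) (hp1 : p ≤ 1) (k : ℕ) (j : ℤ) :
    Summable (firstZeroProb p k j) :=
  summable_of_sum_range_le (firstZeroProb_nonneg hp hp1 k j)
    fun N => sum_range_firstZeroProb_le_one hp hp1 N j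

end FirstStep

section Harmonic

variable {p : ℝ} {k : ℕ} {j : ℤ}

theorem hitZero_of_le_abs (hj : j ≠ 0) (hjk : (k : ℤ) ≤ |j|) : hitZero p k j = 0 := by
  simp [hitZero_eq_tsum_firstZeroProb, firstZeroProb_of_le_abs hj hjk]

theorem hitZero_eq_first_step (hp : 0 ≤ p) (hp1 : p ≤ 1) (hj : j ≠ 0) (hjk : |j| < k) :
    hitZero p k j = p * hitZero p k (j + 1) + (1 - p) * hitZero p k (j - 1) := by
  have hsum := summable_firstZeroProb hp hp1 k
  rw [hitZero_eq_tsum_firstZeroProb, (hsum j).tsum_eq_zero_add, firstZeroProb_zero_of_ne hj,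
    zero_add, tsum_congr (firstZeroProb_succ hj hjk),
    ((hsum _).mul_left p).tsum_add ((hsum _).mul_left (1 - p)), tsum_mul_left, tsum_mul_left,
    hitZero_eq_tsum_firstZeroProb, hitZero_eq_tsum_firstZeroProb]

theorem hitZero_pos (hp : 0 ≤ p) (hp1 : p < 1) (hj : 0 < j) (hjk : j < k) :
    0 < hitZero p k j := by
  obtain ⟨n, rfl⟩ := Int.eq_ofNat_of_zero_le hj.le
  have hdown : IsFirstZeroPath k (n : ℤ) (fun _ : Fin n => false) := by
    refine ⟨by simp [walkPos_const_false], fun m hm => ?_⟩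
    rw [walkPos_const_false hm.le, abs_lt]
    omega
  have hterm : (1 - p) ^ n ≤ firstZeroProb p k n n := by
    have := Finset.single_le_sum
      (f := fun x : Fin n → Bool => if IsFirstZeroPath k n x then walkWt p x else 0)
      (fun x _ => by split <;> simp [walkWt_nonneg hp hp1.le x])
      (Finset.mem_univ fun _ => false)
    simpa only [firstZeroProb, if_pos hdown, walkWt_const_false] using this
  calc 0 < (1 - p) ^ n := pow_pos (sub_pos.mpr hp1) n
    _ ≤ firstZeroProb p k n n := hterm
    _ ≤ hitZero p k n := hitZero_eq_tsum_firstZeroProb p k n ▸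
        (summable_firstZeroProb hp hp1.le k n).le_tsum n
          fun m _ => firstZeroProb_nonneg hp hp1.le k n m

end Harmonic

/-- The conditional up-probabilities satisfy the boundary condition
`u_{k-1}(p) = 0` and the recursion `u_i(p) = p(1-p) + u_{i+1}(p) u_i(p)`
for `1 ≤ i ≤ k-2`. -/
theorem uCond_recursion (k : ℕ) (hk : 2 ≤ k) (p : ℝ) (hp : 0 < p) (hp1 : p < 1) :
    uCond p k ((k : ℤ) - 1) = 0 ∧
    ∀ i : ℤ, 1 ≤ i → i ≤ (k : ℤ) - 2 →
      uCond p k i = p * (1 - p) + uCond p k (i + 1) * uCond p k i := by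
  constructor
  · rw [uCond, sub_add_cancel, hitZero_of_le_abs (by omega) (by simp)]
    simp
  · intro i hi1 hi2
    have h0 : 0 < hitZero p k i := hitZero_pos hp.le hp1 (by omega) (by omega)
    have h1 : 0 < hitZero p k (i + 1) := hitZero_pos hp.le hp1 (by omega) (by omega)
    have harmonic := hitZero_eq_first_step (k := k) (j := i + 1) hp.le hp1.le (by omega)
      (by rw [abs_lt]; omega)
    rw [add_sub_cancel_right] at harmonic
    simp only [uCond]
    field_simp
    linear_combination harmonic
end
end

section
/- Fix j ≥ 0 and 0 < y < k. Conditioned on the simple random walk started at 0 not having hit ±k by time t and being at ±y at time t, the probability of being at +y is p^y / (p^y + (1-p)^y), independently of t. Equivalently, the event {S_t = +y} is conditionally independent of t given {S_t ∈ {+y, -y}, max_{s≤t} |S_s| < k}. -/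
/-!
Flipping every step of a path is a bijection of paths that negates every position, so it
preserves the event of staying strictly inside `(-k, k)` and exchanges `S_t = y` with
`S_t = -y`. A path ending at `y` has `y` more up-steps than down-steps, so flipping it
multiplies its weight by `((1 - p) / p) ^ y`. Hence `p ^ y P(S_t = -y, inside) =
(1 - p) ^ y P(S_t = y, inside)`, which is the claim.
-/

open scoped Classical
noncomputable section

/-- `P(S_t = e, max_{s ≤ t} |S_s| < k)`. -/
def insideAt (p : ℝ) (k t : ℕ) (e : ℤ) : ℝ :=
  ∑ x : Fin t → Bool,
    if (walkPos x t = e ∧ ∀ m ≤ t, |walkPos x m| < (k : ℤ)) then walkWt p x else 0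

open Finset

section Flip

variable {n : ℕ}

lemma walkPos_not (x : Fin n → Bool) (m : ℕ) :
    walkPos (fun i => !x i) m = -walkPos x m := by
  unfold walkPos
  rw [← sum_neg_distrib]
  refine sum_congr rfl fun i _ => ?_
  by_cases hm : (i : ℕ) < m <;> cases hx : x i <;> simp [hm, hx]

lemma walkWt_not (p : ℝ) (x : Fin n → Bool) :
    walkWt p (fun i => !x i) = walkWt (1 - p) x := by
  unfold walkWt
  refine prod_congr rfl fun i _ => ?_
  cases hx : x i <;> simp [hx]

lemma walkWt_eq_pow_mul_pow (p : ℝ) (x : Fin n → Bool) :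
    walkWt p x = p ^ #{i | x i = true} * (1 - p) ^ #{i | x i = false} := by
  unfold walkWt
  simp only [prod_ite, prod_const, Bool.not_eq_true]

lemma walkPos_self (x : Fin n → Bool) :
    walkPos x n = #{i | x i = true} - #{i | x i = false} := by
  unfold walkPos
  simp only [Fin.is_lt, if_true, sum_ite, sum_const, Bool.not_eq_true, nsmul_eq_mul, mul_one,
    mul_neg_one, sub_eq_add_neg]

lemma pow_mul_walkWt_not (p : ℝ) {y : ℕ} {x : Fin n → Bool} (hx : walkPos x n = y) :
    p ^ y * walkWt p (fun i => !x i) = (1 - p) ^ y * walkWt p x := by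
  have hup : #{i | x i = true} = y + #{i | x i = false} := by
    have := walkPos_self x
    omega
  rw [walkWt_not, walkWt_eq_pow_mul_pow, walkWt_eq_pow_mul_pow, sub_sub_cancel, hup, pow_add,
    pow_add]
  ring

end Flip

lemma insideAt_neg (p : ℝ) (k t : ℕ) (e : ℤ) :
    insideAt p k t (-e) = ∑ x : Fin t → Bool,
      if (walkPos x t = e ∧ ∀ m ≤ t, |walkPos x m| < (k : ℤ))
        then walkWt p (fun i => !x i) else 0 := by
  have hflip : Function.Involutive (fun (x : Fin t → Bool) i => !x i) := fun x => by simp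
  unfold insideAt
  refine (Fintype.sum_equiv hflip.toPerm _ _ fun x => ?_).symm
  simp only [Function.Involutive.coe_toPerm, walkPos_not, neg_inj, abs_neg]

lemma pow_mul_insideAt_neg (p : ℝ) (k t y : ℕ) :
    p ^ y * insideAt p k t (-(y : ℤ)) = (1 - p) ^ y * insideAt p k t y := by
  rw [insideAt_neg, insideAt, mul_sum, mul_sum]
  refine sum_congr rfl fun x _ => ?_
  split_ifs with h
  · exact pow_mul_walkWt_not p h.1
  · simp

theorem conditional_position_prob_general (p : ℝ) (hp : 0 < p) (hp1 : p < 1)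
    (k y : ℕ) (t : ℕ) :
    insideAt p k t (y : ℤ) =
      p ^ y / (p ^ y + (1 - p) ^ y) * (insideAt p k t (y : ℤ) + insideAt p k t (-(y : ℤ))) := by
  have hq : 0 < 1 - p := sub_pos.mpr hp1
  have hden : p ^ y + (1 - p) ^ y ≠ 0 := by positivity
  rw [div_mul_eq_mul_div, eq_div_iff hden]
  linear_combination -pow_mul_insideAt_neg p k t y

/-- Conditioned on not having hit `±k` by time `t` and being at `±y` at time `t`,
the probability of being at `+y` is `p^y / (p^y + (1-p)^y)`, independently of `t`. -/
theorem conditional_position_prob (p : ℝ) (hp : 0 < p) (hp1 : p < 1)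
    (k y : ℕ) (hy : 0 < y) (hyk : y < k) (t : ℕ) (hpar : t % 2 = y % 2) :
    insideAt p k t (y : ℤ) =
      p ^ y / (p ^ y + (1 - p) ^ y) * (insideAt p k t (y : ℤ) + insideAt p k t (-(y : ℤ))) :=
  conditional_position_prob_general p hp hp1 k y t
end
end
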